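/- Let F : E × E → E be a coordinate retraction family that is C² on a neighborhood of (0, 0). Then for every K > 0 there exist constants C > 0 and ε > 0 such that for all u, δ, w ∈ E with ‖u‖ ≤ ε, ‖δ‖ ≤ K‖u‖², ‖w‖ ≤ ε and F(δ, w) = u, one has ‖w − u‖ ≤ C‖u‖². (That is, the inverse retraction of the point with normal coordinate u, taken at a base point δ that is second-order close to the origin, equals u up to a second-order error.) -/

import Mathlib

/-!
Let `A = fderiv ℝ F 0`. The normalisations give `F 0 = 0` and `A (δ, w) = A (δ, 0) + w`, and `C²`
gives the Taylor bound `F p = A p + O(‖p‖²)`. Hence `F (δ, w) = u` forces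
`w - u = -A (δ, 0) + O(‖(δ, w)‖²)`. Near the origin the quadratic remainder is at most half of
`‖(δ, w)‖ ≤ ‖u‖ + ‖w‖`, and `‖δ‖ ≤ K ‖u‖² ≤ ‖u‖`; absorbing gives the a priori bound
`‖w‖ ≤ 5 ‖u‖`, after which both error terms are `O(‖u‖²)`.
-/

open Filter Topology Asymptotics Metric

section

variable {E F G : Type*} [NormedAddCommGroup E] [NormedSpace ℝ E]
  [NormedAddCommGroup F] [NormedSpace ℝ F] [NormedAddCommGroup G] [NormedSpace ℝ G]

theorem ContDiffAt.isBigO_sub_sub_fderiv {f : E → F} {x : E} (hf : ContDiffAt ℝ 2 f x) :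
    (fun y => f y - f x - fderiv ℝ f x (y - x)) =O[𝓝 x] fun y => ‖y - x‖ ^ 2 := by
  obtain ⟨L, t, ht, hlip⟩ := (hf.fderiv_right le_rfl).exists_lipschitzOnWith
  have hdiff : ∀ᶠ y in 𝓝 x, DifferentiableAt ℝ f y :=
    (hf.eventually (by simp)).mono fun y hy => hy.differentiableAt two_ne_zero
  obtain ⟨ρ, hρ, hball⟩ := Metric.mem_nhds_iff.1 (inter_mem ht hdiff)
  refine IsBigO.of_bound L ?_
  filter_upwards [ball_mem_nhds x hρ] with y hy
  have hsub : closedBall x ‖y - x‖ ⊆ t ∩ {z | DifferentiableAt ℝ f z} :=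
    (closedBall_subset_ball (by rwa [← dist_eq_norm])).trans hball
  have hderiv : ∀ z ∈ closedBall x ‖y - x‖, ‖fderiv ℝ f z - fderiv ℝ f x‖ ≤ L * ‖y - x‖ := by
    intro z hz
    rw [← dist_eq_norm]
    exact (hlip.dist_le_mul z (hsub hz).1 x (mem_of_mem_nhds ht)).trans
      (mul_le_mul_of_nonneg_left hz (NNReal.coe_nonneg L))
  have := (convex_closedBall x ‖y - x‖).norm_image_sub_le_of_norm_fderiv_le'
    (fun z hz => (hsub hz).2) hderiv (mem_closedBall_self (norm_nonneg _))
    (mem_closedBall.2 (dist_eq_norm y x).le)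
  rw [norm_pow, norm_norm]
  linarith

theorem DifferentiableAt.fderiv_comp_prodMk_right {f : E × F → G} {x : E} {y : F}
    (hf : DifferentiableAt ℝ f (x, y)) :
    fderiv ℝ (fun ζ => f (x, ζ)) y = (fderiv ℝ f (x, y)).comp (ContinuousLinearMap.inr ℝ E F) :=
  (hf.hasFDerivAt.comp y (hasFDerivAt_prodMk_right x y)).fderiv

end

section

variable {E : Type*} [NormedAddCommGroup E] [NormedSpace ℝ E]

theorem exists_norm_sub_le_sq_of_isBigO_sub_map_fst_add_snd {G : E × E → E} {A : E →L[ℝ] E}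
    (hG : (fun p : E × E => G p - (A p.1 + p.2)) =O[𝓝 0] fun p => ‖p‖ ^ 2) (K : ℝ) :
    ∃ C > 0, ∃ ε > 0, ∀ u δ w : E, ‖u‖ ≤ ε → ‖δ‖ ≤ K * ‖u‖ ^ 2 → ‖w‖ ≤ ε → G (δ, w) = u →
      ‖w - u‖ ≤ C * ‖u‖ ^ 2 := by
  obtain ⟨c, hc, hcG⟩ := hG.exists_pos
  obtain ⟨ρ, hρ, hρG⟩ := Metric.eventually_nhds_iff.1 hcG.bound
  set M := ‖A‖ * |K|
  have hM : 0 ≤ M := by positivity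
  set ε := min (ρ / 2) (1 / (2 * c + M + |K| + 1))
  have hε : 0 < ε := by positivity
  have hερ : ε < ρ := (min_le_left _ _).trans_lt (half_lt_self hρ)
  have hεN : ε * (2 * c + M + |K| + 1) ≤ 1 :=
    (le_div_iff₀ (by positivity)).1 (min_le_right _ _)
  refine ⟨25 * c + M, by positivity, ε, hε, fun u δ w hu hδ hw hGu => ?_⟩
  have hδ' : ‖δ‖ ≤ |K| * ‖u‖ ^ 2 := hδ.trans (by gcongr; exact le_abs_self K)
  have hAδ : ‖A δ‖ ≤ M * ‖u‖ ^ 2 :=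
    (A.le_opNorm δ).trans (by rw [mul_assoc]; gcongr)
  have hsq : ∀ a : ℝ, 0 ≤ a → a * ε ≤ 1 → a * ‖u‖ ^ 2 ≤ ‖u‖ := fun a ha haε => by
    nlinarith [mul_le_mul_of_nonneg_left hu ha, norm_nonneg u]
  have hδu : ‖δ‖ ≤ ‖u‖ :=
    hδ'.trans (hsq _ (abs_nonneg K) (by nlinarith [mul_nonneg hε.le hc.le, mul_nonneg hε.le hM]))
  have hAδu : ‖A δ‖ ≤ ‖u‖ :=
    hAδ.trans (hsq _ hM (by nlinarith [mul_nonneg hε.le hc.le, mul_nonneg hε.le (abs_nonneg K)]))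
  have hr : ‖(δ, w)‖ ≤ ε := max_le (hδu.trans hu) hw
  have hcr : c * ‖(δ, w)‖ ≤ 1 / 2 := by
    nlinarith [mul_le_mul_of_nonneg_left hr hc.le, mul_nonneg hε.le hM,
      mul_nonneg hε.le (abs_nonneg K)]
  have hrem : ‖w - u‖ ≤ c * ‖(δ, w)‖ ^ 2 + ‖A δ‖ := by
    have h := hρG (y := (δ, w)) (by rw [dist_zero_right]; exact hr.trans_lt hερ)
    rw [hGu, norm_pow, norm_norm] at h
    calc ‖w - u‖ = ‖-(u - (A δ + w)) - A δ‖ := by congr 1; abel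
      _ ≤ ‖u - (A δ + w)‖ + ‖A δ‖ := by rw [← norm_neg (u - _)]; exact norm_sub_le _ _
      _ ≤ c * ‖(δ, w)‖ ^ 2 + ‖A δ‖ := by gcongr
  have hw5 : ‖w‖ ≤ 5 * ‖u‖ := by
    have hr' : ‖(δ, w)‖ ≤ ‖u‖ + ‖w‖ :=
      max_le (by linarith [norm_nonneg w]) (by linarith [norm_nonneg u])
    have := norm_le_norm_add_norm_sub' w u
    nlinarith [norm_nonneg (δ, w)]
  have hr5 : ‖(δ, w)‖ ≤ 5 * ‖u‖ := max_le (hδu.trans (by linarith [norm_nonneg u])) hw5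
  calc ‖w - u‖ ≤ c * ‖(δ, w)‖ ^ 2 + ‖A δ‖ := hrem
    _ ≤ c * (5 * ‖u‖) ^ 2 + M * ‖u‖ ^ 2 := by gcongr
    _ = (25 * c + M) * ‖u‖ ^ 2 := by ring

end

theorem inverse_retraction_near_midpoint_second_order_general
    {E : Type*} [NormedAddCommGroup E] [InnerProductSpace ℝ E]
    (F : E × E → E)
    (hF : ContDiffAt ℝ 2 F (0, 0))
    (hF0 : ∀ᶠ z in nhds (0 : E), F (z, 0) = z)
    (hFid : fderiv ℝ (fun ζ : E => F (0, ζ)) 0 = ContinuousLinearMap.id ℝ E) :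
    ∀ K > 0, ∃ C > 0, ∃ ε > 0, ∀ u δ w : E,
      ‖u‖ ≤ ε → ‖δ‖ ≤ K * ‖u‖ ^ 2 → ‖w‖ ≤ ε → F (δ, w) = u →
      ‖w - u‖ ≤ C * ‖u‖ ^ 2 := by
  intro K _
  have hDinr :
      (fderiv ℝ F 0).comp (ContinuousLinearMap.inr ℝ E E) = ContinuousLinearMap.id ℝ E :=
    (hF.differentiableAt two_ne_zero).fderiv_comp_prodMk_right.symm.trans hFid
  have hF00 : F 0 = 0 := hF0.self_of_nhds
  have hTaylor := hF.isBigO_sub_sub_fderiv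
  simp only [Prod.mk_zero_zero, sub_zero, hF00] at hTaylor
  refine exists_norm_sub_le_sq_of_isBigO_sub_map_fst_add_snd
    (A := (fderiv ℝ F 0).comp (ContinuousLinearMap.inl ℝ E E)) (hTaylor.congr_left fun p => ?_) K
  rw [← (fderiv ℝ F 0).comp_inl_add_comp_inr p, hDinr, ContinuousLinearMap.id_apply]

/-- **The inverse retraction at a near-midpoint base is second-order accurate.**
If `F` is a coordinate retraction family that is `C²` near `(0, 0)`, `δ` is a base point
with `‖δ‖ ≤ K ‖u‖²`, and `w` is the inverse retraction of the point with normal coordinate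
`u` at base `δ` (i.e. `F (δ, w) = u`), then `‖w - u‖ ≤ C ‖u‖²`. -/
theorem inverse_retraction_near_midpoint_second_order
    {E : Type*} [NormedAddCommGroup E] [InnerProductSpace ℝ E] [FiniteDimensional ℝ E]
    (F : E × E → E)
    (hF : ContDiffAt ℝ 2 F (0, 0))
    (hF0 : ∀ᶠ z in nhds (0 : E), F (z, 0) = z)
    (hFid : fderiv ℝ (fun ζ : E => F (0, ζ)) 0 = ContinuousLinearMap.id ℝ E) :
    ∀ K > 0, ∃ C > 0, ∃ ε > 0, ∀ u δ w : E,
      ‖u‖ ≤ ε → ‖δ‖ ≤ K * ‖u‖ ^ 2 → ‖w‖ ≤ ε → F (δ, w) = u →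
      ‖w - u‖ ≤ C * ‖u‖ ^ 2 :=
  inverse_retraction_near_midpoint_second_order_general F hF hF0 hFid
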